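/- Let q be a prime power, n ≥ 2, r ≥ 2 even. Then U = {(x₁,…,x_{r/2}, x₁^q,…,x_{r/2}^q) : x_i ∈ 𝔽_{q^n}} is a scattered 𝔽_q-subspace of 𝔽_{q^n}^r of 𝔽_q-dimension rn/2. -/

import Mathlib

/-!
`U` is the graph of the Frobenius `x ↦ x ^ q` acting coordinatewise on `𝔽_{q^n}^{r/2}`, so it has
the dimension of `𝔽_{q^n}^{r/2}` over `𝔽_q`. If `u = (x, x^q) ≠ 0` and `c • u ∈ U`, then comparing a
nonzero coordinate `x i` gives `c x_i^q = (c x_i)^q`, i.e. `c^q = c`, so `c ∈ 𝔽_q`; hence `U` meets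
every `𝔽_{q^n}`-line in at most an `𝔽_q`-line.
-/

open Module

theorem FiniteField.mem_range_algebraMap_of_pow_card_eq_self {K L : Type*} [Field K] [Fintype K]
    [Field L] [Finite L] [Algebra K L] {c : L} (hc : c ^ Fintype.card K = c) :
    c ∈ Set.range (algebraMap K L) := by
  rw [IsGalois.mem_range_algebraMap_iff_fixed]
  intro f
  obtain ⟨k, rfl⟩ := (bijective_frobeniusAlgEquivOfAlgebraic_pow K L).2 f
  rw [AlgEquiv.coe_pow]
  exact Function.iterate_fixed hc k

theorem Module.finrank_eq_of_card_eq_pow {K V : Type*} [Field K] [Fintype K] [AddCommGroup V]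
    [Module K V] [Fintype V] {n : ℕ} (h : Fintype.card V = Fintype.card K ^ n) :
    finrank K V = n :=
  Nat.pow_right_injective Fintype.one_lt_card (card_eq_pow_finrank.symm.trans h)

theorem LinearMap.finrank_graph {K M N : Type*} [Field K] [AddCommGroup M] [Module K M]
    [AddCommGroup N] [Module K N] (f : M →ₗ[K] N) : finrank K f.graph = finrank K M := by
  rw [graph_eq_range_prod]
  exact finrank_range_of_inj fun x y h => congrArg Prod.fst h

namespace Submodule

variable {K : Type*} (L : Type*) {M : Type*} [Field K] [Field L] [Algebra K L] [AddCommGroup M]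
  [Module L M] [Module K M] [IsScalarTower K L M]

def IsScattered (U : Submodule K M) : Prop :=
  ∀ v : M, v ≠ 0 → finrank K ↥(U ⊓ (span L {v}).restrictScalars K) ≤ 1

variable {L}

theorem isScattered_of_smul_mem {U : Submodule K M}
    (h : ∀ u ∈ U, u ≠ 0 → ∀ c : L, c • u ∈ U → c ∈ Set.range (algebraMap K L)) :
    U.IsScattered L := by
  intro v _
  set W := U ⊓ (span L {v}).restrictScalars K
  rcases eq_or_ne W ⊥ with hW | hW
  · rw [hW, finrank_bot]
    exact zero_le_one
  obtain ⟨u, ⟨huU, huv⟩, hu0⟩ := exists_mem_ne_zero_of_ne_bot hW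
  obtain ⟨μ, rfl⟩ := mem_span_singleton.1 huv
  have hμ : μ ≠ 0 := by rintro rfl; exact hu0 (zero_smul L v)
  refine finrank_le_one ⟨μ • v, huU, huv⟩ fun ⟨w, hwU, hwv⟩ => ?_
  obtain ⟨ν, rfl⟩ := mem_span_singleton.1 hwv
  have hw : ν • v = (ν / μ) • μ • v := by rw [smul_smul, div_mul_cancel₀ _ hμ]
  obtain ⟨a, ha⟩ := h _ huU hu0 (ν / μ) (hw ▸ hwU)
  exact ⟨a, Subtype.ext (by simp [← algebraMap_smul L a, ha, ← hw])⟩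

end Submodule

theorem FiniteField.isScattered_graph_frobeniusAlgHom (K L ι : Type*) [Field K] [Fintype K]
    [Field L] [Finite L] [Algebra K L] :
    (frobeniusAlgHom K (ι → L)).toLinearMap.graph.IsScattered L := by
  refine Submodule.isScattered_of_smul_mem fun ⟨x, y⟩ hu hu0 c hcu => ?_
  simp only [LinearMap.mem_graph_iff, AlgHom.toLinearMap_apply, coe_frobeniusAlgHom] at hu hcu
  obtain ⟨i, hi⟩ : ∃ i, x i ≠ 0 := by
    by_contra! hx
    obtain rfl : x = 0 := funext hx
    exact hu0 (by simp [hu, Fintype.card_ne_zero])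
  apply mem_range_algebraMap_of_pow_card_eq_self
  have := congrFun hcu i
  simp only [hu, Prod.smul_fst, Prod.smul_snd, Pi.smul_apply, Pi.pow_apply, smul_eq_mul,
    mul_pow] at this
  exact (mul_right_cancel₀ (pow_ne_zero _ hi) this).symm

theorem lavrauw_scattered_subspace_general
    (q n r m : ℕ) (hrm : r = 2 * m)
    (Fq K : Type*) [Field Fq] [Field K] [Fintype Fq] [Fintype K] [Algebra Fq K]
    (hq : Fintype.card Fq = q) (hK : Fintype.card K = q ^ n)
    (U : Submodule Fq ((Fin m → K) × (Fin m → K)))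
    (hU : (U : Set ((Fin m → K) × (Fin m → K)))
        = {p | ∃ x : Fin m → K, p = (x, fun i => x i ^ q)}) :
    Module.finrank Fq U = r * n / 2 ∧
      ∀ v : (Fin m → K) × (Fin m → K), v ≠ 0 →
        Module.finrank Fq
          ↥(U ⊓ (Submodule.span K {v}).restrictScalars Fq) ≤ 1 := by
  subst hq hrm
  obtain rfl : U = (FiniteField.frobeniusAlgHom Fq (Fin m → K)).toLinearMap.graph := by
    refine SetLike.coe_injective (hU.trans ?_)
    ext p
    exact ⟨fun ⟨x, hx⟩ => hx ▸ rfl, fun hp => ⟨p.1, Prod.ext rfl hp⟩⟩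
  refine ⟨?_, FiniteField.isScattered_graph_frobeniusAlgHom Fq K (Fin m)⟩
  rw [LinearMap.finrank_graph, finrank_pi_fintype, Finset.sum_const, Finset.card_univ,
    Fintype.card_fin, smul_eq_mul, finrank_eq_of_card_eq_pow hK, mul_assoc, Nat.mul_div_cancel_left _ two_pos]

/-- Lavrauw's example of a maximum scattered `𝔽_q`-subspace of `𝔽_{q^n}^r`,
`r = 2m` even, of `𝔽_q`-dimension `rn/2`. -/
theorem lavrauw_scattered_subspace
    (q n r m : ℕ) (hn : 2 ≤ n) (hr2 : 2 ≤ r) (hrm : r = 2 * m)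
    (Fq K : Type*) [Field Fq] [Field K] [Fintype Fq] [Fintype K] [Algebra Fq K]
    (hq : Fintype.card Fq = q) (hK : Fintype.card K = q ^ n)
    (U : Submodule Fq ((Fin m → K) × (Fin m → K)))
    (hU : (U : Set ((Fin m → K) × (Fin m → K)))
        = {p | ∃ x : Fin m → K, p = (x, fun i => x i ^ q)}) :
    Module.finrank Fq U = r * n / 2 ∧
      ∀ v : (Fin m → K) × (Fin m → K), v ≠ 0 →
        Module.finrank Fq
          ↥(U ⊓ (Submodule.span K {v}).restrictScalars Fq) ≤ 1 :=
  lavrauw_scattered_subspace_general q n r m hrm Fq K hq hK U hU
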